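/- Let w be an element of S_Z, let A be a subset of Inv(w), and let n be a positive integer. The map unprime, sending (a^1,...,a^n) to (ceil(a^1),...,ceil(a^n)), is a weight-preserving bijection from RF^+_n(w,A) onto RF_n(w) that commutes with the crystal operators e_i and f_i for all i in {1,...,n-1} (with the convention unprime(0) = 0). -/

import Mathlib

open MvPolynomial

/-! ### Permutations of ℤ, reduced words -/

/-- The simple transposition `s_i = (i, i+1)` of `ℤ`. -/
def sT (i : ℤ) : Equiv.Perm ℤ := Equiv.swap i (i + 1)

/-- The product `s_{i_1} s_{i_2} ⋯ s_{i_l}` of the simple transpositions indexed by a word. -/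
def wordProd (l : List ℤ) : Equiv.Perm ℤ := (l.map sT).prod

/-- `S_ℤ`: the subgroup of permutations of `ℤ` generated by the simple transpositions. -/
def SZSet : Set (Equiv.Perm ℤ) := {w | ∃ l : List ℤ, wordProd l = w}

/-- `S_∞`: the subgroup generated by `s_i` for `i ≥ 1`. -/
def SinftySet : Set (Equiv.Perm ℤ) :=
  {w | ∃ l : List ℤ, (∀ i ∈ l, 1 ≤ i) ∧ wordProd l = w}

/-- `S_n`: the subgroup generated by `s_i` for `1 ≤ i ≤ n-1`. -/
def SnSet (n : ℕ) : Set (Equiv.Perm ℤ) :=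
  {w | ∃ l : List ℤ, (∀ i ∈ l, 1 ≤ i ∧ i < n) ∧ wordProd l = w}

/-- A reduced word for `w`: a minimal length word whose product is `w`. -/
def IsReducedWord (w : Equiv.Perm ℤ) (l : List ℤ) : Prop :=
  wordProd l = w ∧ ∀ m : List ℤ, wordProd m = w → l.length ≤ m.length

/-- The Coxeter length of `w` (the length of any reduced word for `w`). -/
noncomputable def lenOf (w : Equiv.Perm ℤ) : ℕ :=
  sInf {m | ∃ l : List ℤ, wordProd l = w ∧ l.length = m}

/-- The inversion set `Inv(w) = {(a,b) : a < b, w(a) > w(b)}`. -/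
def InvSet (w : Equiv.Perm ℤ) : Set (ℤ × ℤ) := {p | p.1 < p.2 ∧ w p.2 < w p.1}

/-- The Lehmer code `c_i(w) = #{j : i < j, w(i) > w(j)}`. -/
noncomputable def codeOf (w : Equiv.Perm ℤ) (i : ℤ) : ℕ := {j : ℤ | i < j ∧ w j < w i}.ncard

/-- The Rothe diagram `D(w) = {(i, w(j)) : i < j, w(i) > w(j)}`. -/
def RotheD (w : Equiv.Perm ℤ) : Set (ℤ × ℤ) :=
  {p | ∃ j : ℤ, p.1 < j ∧ w j < w p.1 ∧ p.2 = w j}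

/-! ### Primed letters and primed words -/

/-- A primed letter: `(x, false)` denotes the integer `x`, `(x, true)` denotes `x' = x - 1/2`. -/
abbrev PLetter := ℤ × Bool

/-- Twice the value of a primed letter (so that comparisons agree with `1' < 1 < 2' < 2 < ⋯`). -/
def pval (p : PLetter) : ℤ := 2 * p.1 - (if p.2 then 1 else 0)

/-- A strictly decreasing primed word. -/
def PDec (l : List PLetter) : Prop := l.Pairwise (fun p q => pval q < pval p)

/-- A strictly decreasing integer word. -/
def ZDec (l : List ℤ) : Prop := l.Pairwise (fun x y => y < x)

/-- Remove the primes from a primed word (the "ceiling"). -/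
def unprimeW (l : List PLetter) : List ℤ := l.map Prod.fst

/-- Membership in `R⁺(w)`: a primed word whose unprimed form is a reduced word for `w`. -/
def IsPrimedReducedWord (w : Equiv.Perm ℤ) (l : List PLetter) : Prop :=
  IsReducedWord w (unprimeW l)

/-- The set `Marked(i)` of marked inversions of a primed word. -/
def markedSet (l : List PLetter) : Set (ℤ × ℤ) :=
  {p | ∃ j : Fin l.length, (l.get j).2 = true ∧
        p.1 = wordProd ((l.drop ((j : ℕ) + 1)).reverse.map Prod.fst) (l.get j).1 ∧
        p.2 = wordProd ((l.drop ((j : ℕ) + 1)).reverse.map Prod.fst) ((l.get j).1 + 1)}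

/-! ### Factorizations (as sequences of factors) -/

/-- The concatenation of the first `N` factors of a factorization. -/
def concatP (a : ℕ → List PLetter) (N : ℕ) : List PLetter := ((List.range N).map a).flatten

/-- The concatenation of the first `N` factors of an unprimed factorization. -/
def concatZ (a : ℕ → List ℤ) (N : ℕ) : List ℤ := ((List.range N).map a).flatten

/-- `RF⁺(w, A)`: decreasing primed reduced factorizations of `w` with marked set `A`
(all but finitely many factors empty). -/
def RFplus (w : Equiv.Perm ℤ) (A : Set (ℤ × ℤ)) : Set (ℕ → List PLetter) :=
  {a | (∀ i, PDec (a i)) ∧ ∃ N : ℕ, (∀ m, N ≤ m → a m = []) ∧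
        IsPrimedReducedWord w (concatP a N) ∧ markedSet (concatP a N) = A}

/-- `RF⁺_n(w, A)`: elements of `RF⁺(w, A)` with all factors beyond the first `n` empty. -/
def RFplusN (n : ℕ) (w : Equiv.Perm ℤ) (A : Set (ℤ × ℤ)) : Set (ℕ → List PLetter) :=
  {a | (∀ i, PDec (a i)) ∧ (∀ m, n ≤ m → a m = []) ∧
        IsPrimedReducedWord w (concatP a n) ∧ markedSet (concatP a n) = A}

/-- `RF_n(w)`: unprimed decreasing reduced factorizations of `w` into at most `n` factors. -/
def RFZn (n : ℕ) (w : Equiv.Perm ℤ) : Set (ℕ → List ℤ) :=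
  {a | (∀ i, ZDec (a i)) ∧ (∀ m, n ≤ m → a m = []) ∧ IsReducedWord w (concatZ a n)}

/-- Removing the primes from each factor of a primed factorization. -/
def unprimeF (a : ℕ → List PLetter) : ℕ → List ℤ := fun m => unprimeW (a m)

/-! ### The pairing procedure and crystal operators (primed version) -/

/-- Find the first letter `b` in the (decreasing) list with `⌈b⌉ < c`, removing it. -/
def findPairP (c : ℤ) : List PLetter → Option PLetter × List PLetter
  | [] => (none, [])
  | b :: rest =>
      if b.1 < c then (some b, rest)
      else
        let r := findPairP c rest
        (r.1, b :: r.2)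

/-- Iterate the pairing over the letters of `v` from right to left. -/
def pairFoldP (u : List PLetter) (vrev : List PLetter) :
    List (PLetter × PLetter) × List PLetter :=
  vrev.foldl (fun st c =>
    match findPairP c.1 st.2 with
    | (none, r) => (st.1, r)
    | (some b, r) => ((b, c) :: st.1, r)) ([], u)

/-- The set `pair(u, v)` of paired letters, as a list of pairs. -/
def pairsP (u v : List PLetter) : List (PLetter × PLetter) := (pairFoldP u v.reverse).1

/-- The unpaired letters of `v` (in decreasing order). -/
def unpairedSnd (u v : List PLetter) : List PLetter :=
  v.filter fun c => decide (c ∉ (pairsP u v).map Prod.snd)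

/-- The unpaired letters of `u` (in decreasing order). -/
def unpairedFst (u v : List PLetter) : List PLetter :=
  u.filter fun b => decide (b ∉ (pairsP u v).map Prod.fst)

theorem exists_add_not_mem (L : List ℤ) (x : ℤ) : ∃ q : ℕ, x + q ∉ L := by
  have h : ∃ q : ℕ, ∀ y ∈ L, y < x + q := by
    induction L with
    | nil => exact ⟨1, by simp⟩
    | cons a t ih =>
      obtain ⟨q, hq⟩ := ih
      refine ⟨q + (a - x).toNat + 1, ?_⟩
      intro y hy
      rcases List.mem_cons.mp hy with rfl | h
      · push_cast; omega
      · have := hq y h; push_cast; omega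
  obtain ⟨q, hq⟩ := h
  exact ⟨q, fun hmem => lt_irrefl _ (hq _ hmem)⟩

theorem exists_sub_not_mem (L : List ℤ) (x : ℤ) : ∃ q : ℕ, x - q ∉ L := by
  have h : ∃ q : ℕ, ∀ y ∈ L, x - q < y := by
    induction L with
    | nil => exact ⟨1, by simp⟩
    | cons a t ih =>
      obtain ⟨q, hq⟩ := ih
      refine ⟨q + (x - a).toNat + 1, ?_⟩
      intro y hy
      rcases List.mem_cons.mp hy with rfl | h
      · push_cast; omega
      · have := hq y h; push_cast; omega
  obtain ⟨q, hq⟩ := h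
  exact ⟨q, fun hmem => lt_irrefl _ (hq _ hmem)⟩

/-- The minimal `q ∈ ℕ` with `x + q ∉ L`. -/
def qUp (L : List ℤ) (x : ℤ) : ℕ := Nat.find (exists_add_not_mem L x)

/-- The minimal `q ∈ ℕ` with `x - q ∉ L`. -/
def qDown (L : List ℤ) (x : ℤ) : ℕ := Nat.find (exists_sub_not_mem L x)

/-- Reverse the prime on a primed letter. -/
def toggleP (p : PLetter) : PLetter := (p.1, !p.2)

/-- Toggle the prime on the occurrence of the letter `p` in a primed word. -/
def toggleIn (l : List PLetter) (p : PLetter) : List PLetter :=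
  l.map fun q => if q = p then toggleP q else q

/-- Swap the primes on a pair `(b, c)` with `b` in the first word and `c` in the second:
reverse both primes when exactly one of the two letters is primed. -/
def swapPairIn (uv : List PLetter × List PLetter) (bc : PLetter × PLetter) :
    List PLetter × List PLetter :=
  if bc.1.2 = bc.2.2 then uv else (toggleIn uv.1 bc.1, toggleIn uv.2 bc.2)

/-- Insert a letter into a decreasing primed word at the correct position. -/
def insertDecP (p : PLetter) : List PLetter → List PLetter
  | [] => [p]
  | q :: t => if pval q < pval p then p :: q :: t else q :: insertDecP p t

/-- The raising crystal operator acting on a consecutive pair of factors (primed version). -/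
def eStepP (u v : List PLetter) : Option (List PLetter × List PLetter) :=
  match unpairedSnd u v with
  | [] => none
  | x :: _ =>
    let q : ℕ := qUp (unprimeW u) x.1
    let toSwap := (pairsP u v).filter fun bc => decide (x.1 < bc.2.1 ∧ bc.2.1 ≤ x.1 + q)
    some (toSwap.foldl swapPairIn (insertDecP (x.1 + q, x.2) u, v.erase x))

/-- The lowering crystal operator acting on a consecutive pair of factors (primed version). -/
def fStepP (u v : List PLetter) : Option (List PLetter × List PLetter) :=
  match (unpairedFst u v).getLast? with
  | none => none
  | some y =>
    let q : ℕ := qDown (unprimeW v) y.1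
    let toSwap := (pairsP u v).filter fun bc => decide (y.1 - q ≤ bc.1.1 ∧ bc.1.1 < y.1)
    some (toSwap.foldl swapPairIn (u.erase y, insertDecP (y.1 - q, y.2) v))

/-- Apply a two-factor operator at position `(i, i+1)` of a factorization. -/
def applyAtP (g : List PLetter → List PLetter → Option (List PLetter × List PLetter))
    (i : ℕ) (a : ℕ → List PLetter) : Option (ℕ → List PLetter) :=
  (g (a i) (a (i + 1))).map fun uv =>
    Function.update (Function.update a i uv.1) (i + 1) uv.2

/-- The crystal operator `e` on primed factorizations acting on factors `i, i+1` (0-indexed). -/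
def eP (i : ℕ) (a : ℕ → List PLetter) : Option (ℕ → List PLetter) := applyAtP eStepP i a

/-- The crystal operator `f` on primed factorizations acting on factors `i, i+1` (0-indexed). -/
def fP (i : ℕ) (a : ℕ → List PLetter) : Option (ℕ → List PLetter) := applyAtP fStepP i a

/-! ### Crystal operators (unprimed version) -/

def findPairZ (c : ℤ) : List ℤ → Option ℤ × List ℤ
  | [] => (none, [])
  | b :: rest =>
      if b < c then (some b, rest)
      else
        let r := findPairZ c rest
        (r.1, b :: r.2)

def pairFoldZ (u : List ℤ) (vrev : List ℤ) : List (ℤ × ℤ) × List ℤ :=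
  vrev.foldl (fun st c =>
    match findPairZ c st.2 with
    | (none, r) => (st.1, r)
    | (some b, r) => ((b, c) :: st.1, r)) ([], u)

/-- The set `pair(u, v)` for integer words. -/
def pairsZ (u v : List ℤ) : List (ℤ × ℤ) := (pairFoldZ u v.reverse).1

def insertDecZ (x : ℤ) : List ℤ → List ℤ
  | [] => [x]
  | q :: t => if q < x then x :: q :: t else q :: insertDecZ x t

/-- The raising crystal operator on a consecutive pair of integer factors. -/
def eStepZ (u v : List ℤ) : Option (List ℤ × List ℤ) :=
  match v.filter (fun c => decide (c ∉ (pairsZ u v).map Prod.snd)) with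
  | [] => none
  | x :: _ =>
    let q : ℕ := qUp u x
    some (insertDecZ (x + q) u, v.erase x)

/-- The lowering crystal operator on a consecutive pair of integer factors. -/
def fStepZ (u v : List ℤ) : Option (List ℤ × List ℤ) :=
  match (u.filter (fun b => decide (b ∉ (pairsZ u v).map Prod.fst))).getLast? with
  | none => none
  | some y =>
    let q : ℕ := qDown v y
    some (u.erase y, insertDecZ (y - q) v)

def applyAtZ (g : List ℤ → List ℤ → Option (List ℤ × List ℤ))
    (i : ℕ) (a : ℕ → List ℤ) : Option (ℕ → List ℤ) :=
  (g (a i) (a (i + 1))).map fun uv =>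
    Function.update (Function.update a i uv.1) (i + 1) uv.2

/-- The crystal operator `e` acting on factors `i, i+1` (0-indexed) of an integer factorization,
so that `eZ i` is the paper's `e_{i+1}`. -/
def eZ (i : ℕ) (a : ℕ → List ℤ) : Option (ℕ → List ℤ) := applyAtZ eStepZ i a

/-- The crystal operator `f` acting on factors `i, i+1` (0-indexed). -/
def fZ (i : ℕ) (a : ℕ → List ℤ) : Option (ℕ → List ℤ) := applyAtZ fStepZ i a

/-! ### Coxeter–Knuth equivalence and tableaux -/

/-- One elementary Coxeter–Knuth move. -/
inductive CKStep : List ℤ → List ℤ → Prop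
  | acb (u v : List ℤ) {a b c : ℤ} (h1 : a < b) (h2 : b < c) :
      CKStep (u ++ a :: c :: b :: v) (u ++ c :: a :: b :: v)
  | bca (u v : List ℤ) {a b c : ℤ} (h1 : a < b) (h2 : b < c) :
      CKStep (u ++ b :: c :: a :: v) (u ++ b :: a :: c :: v)
  | braid (u v : List ℤ) {a b : ℤ} (h : b = a + 1 ∨ b = a - 1) :
      CKStep (u ++ a :: b :: a :: v) (u ++ b :: a :: b :: v)

/-- Coxeter–Knuth equivalence. -/
def CKEquiv : List ℤ → List ℤ → Prop := Relation.EqvGen CKStep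

/-- A tableau is recorded as its list of rows; its shape is the list of row lengths. -/
def shapeOf (T : List (List ℤ)) : List ℕ := T.map List.length

/-- The row reading word: rows left to right, starting with the last row. -/
def rowword (T : List (List ℤ)) : List ℤ := T.reverse.flatten

/-- The reverse row reading word. -/
def revrow (T : List (List ℤ)) : List ℤ := (rowword T).reverse

/-- The entry of `T` in row `i`, position `j` within the row (both 0-indexed). -/
def entryOf (T : List (List ℤ)) (i j : ℕ) : ℤ := (T.getD i []).getD j 0

/-- `T` has partition shape: rows nonempty with weakly decreasing lengths. -/
def IsPartShape (T : List (List ℤ)) : Prop :=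
  (∀ r ∈ T, r ≠ []) ∧ ∀ i, i + 1 < T.length → (T.getD (i + 1) []).length ≤ (T.getD i []).length

/-- An increasing tableau of partition shape. -/
def IncrTab (T : List (List ℤ)) : Prop :=
  IsPartShape T ∧ (∀ r ∈ T, r.Pairwise (· < ·)) ∧
  ∀ i j, i + 1 < T.length → j < (T.getD (i + 1) []).length → entryOf T i j < entryOf T (i + 1) j

/-- A decreasing tableau of partition shape. -/
def DecrTab (T : List (List ℤ)) : Prop :=
  IsPartShape T ∧ (∀ r ∈ T, r.Pairwise (fun x y => y < x)) ∧
  ∀ i j, i + 1 < T.length → j < (T.getD (i + 1) []).length → entryOf T (i + 1) j < entryOf T i j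

/-! ### Shifted tableaux -/

/-- Strict partition shape: rows nonempty with strictly decreasing lengths.  Row `i`
(0-indexed) of a shifted tableau occupies columns `i, i+1, …`. -/
def IsStrictShape (T : List (List ℤ)) : Prop :=
  (∀ r ∈ T, r ≠ []) ∧ ∀ i, i + 1 < T.length → (T.getD (i + 1) []).length < (T.getD i []).length

/-- An increasing shifted tableau: rows and columns strictly increase.  In row-list
coordinates, the entry of row `i+1` in within-row position `j` lies in the same column as the
entry of row `i` in within-row position `j+1`. -/
def ShIncrTab (T : List (List ℤ)) : Prop :=
  IsStrictShape T ∧ (∀ r ∈ T, r.Pairwise (· < ·)) ∧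
  ∀ i j, i + 1 < T.length → j < (T.getD (i + 1) []).length →
    entryOf T i (j + 1) < entryOf T (i + 1) j

/-- A decreasing shifted tableau. -/
def ShDecrTab (T : List (List ℤ)) : Prop :=
  IsStrictShape T ∧ (∀ r ∈ T, r.Pairwise (fun x y => y < x)) ∧
  ∀ i j, i + 1 < T.length → j < (T.getD (i + 1) []).length →
    entryOf T (i + 1) j < entryOf T i (j + 1)

/-! ### Young diagrams of partitions given as lists -/

/-- The Young diagram of a partition given as a list of row lengths (1-indexed positions). -/
def YDiagL (lam : List ℕ) : Set (ℤ × ℤ) :=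
  {p | 1 ≤ p.1 ∧ 1 ≤ p.2 ∧ p.2 ≤ (lam.getD (p.1 - 1).toNat 0 : ℤ)}

/-- The tableau `T_λ` with entry `i + j - 1` in each box `(i, j)` of `D_λ` (1-indexed). -/
def Tlam (lam : List ℕ) : List (List ℤ) :=
  lam.mapIdx fun i k => (List.range k).map fun j => ((i + j + 1 : ℕ) : ℤ)

/-! ### Fixed-point-free involutions -/

def fpfFun (i : ℤ) : ℤ := if Even i then i - 1 else i + 1

theorem fpfFun_involutive : Function.Involutive fpfFun := by
  intro i
  simp only [fpfFun, Int.even_iff]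
  split <;> split <;> omega

/-- The fixed-point-free involution `1_fpf : i ↦ i - (-1)^i`. -/
def onefpf : Equiv.Perm ℤ :=
  ⟨fpfFun, fpfFun, fpfFun_involutive, fpfFun_involutive⟩

/-- `I^fpf_ℤ`: the `S_ℤ`-conjugation orbit of `1_fpf`. -/
def IfpfZ : Set (Equiv.Perm ℤ) := {z | ∃ w ∈ SZSet, z = w⁻¹ * onefpf * w}

/-- `I^fpf_∞`: the `S_∞`-conjugation orbit of `1_fpf`. -/
def IfpfInfty : Set (Equiv.Perm ℤ) := {z | ∃ w ∈ SinftySet, z = w⁻¹ * onefpf * w}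

/-- `𝒜^Sp(z)`: minimal-length `w ∈ S_ℤ` with `z = w⁻¹ 1_fpf w`. -/
def ASp (z : Equiv.Perm ℤ) : Set (Equiv.Perm ℤ) :=
  {w | w ∈ SZSet ∧ z = w⁻¹ * onefpf * w ∧
       ∀ v ∈ SZSet, z = v⁻¹ * onefpf * v → lenOf w ≤ lenOf v}

/-- `R^Sp(z)`: the set of fpf-involution words for `z`. -/
def RSp (z : Equiv.Perm ℤ) : Set (List ℤ) := {l | ∃ w ∈ ASp z, IsReducedWord w l}

/-- The fpf-involution code `c^Sp_i(z)`. -/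
noncomputable def cSp (z : Equiv.Perm ℤ) (i : ℤ) : ℕ :=
  {j : ℤ | i < j ∧ z j < min i (z i)}.ncard

/-- `RF^Sp_n(z)`: symplectic reduced factorizations into at most `n` decreasing factors. -/
def RFSp (n : ℕ) (z : Equiv.Perm ℤ) : Set (ℕ → List ℤ) :=
  {a | (∀ i, ZDec (a i)) ∧ (∀ m, n ≤ m → a m = []) ∧ concatZ a n ∈ RSp z}

/-- `BRF^Sp_n(z)`: the bounded (by the standard flag) symplectic reduced factorizations:
every letter `m` of the factor in (0-indexed) position `i` satisfies `m ≥ i + 1`. -/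
def BRFSp (n : ℕ) (z : Equiv.Perm ℤ) : Set (ℕ → List ℤ) :=
  {a | a ∈ RFSp n z ∧ ∀ m, ∀ x ∈ a m, (m : ℤ) + 1 ≤ x}

/-! ### Symplectic Coxeter–Knuth equivalence -/

/-- The extra symplectic relations, affecting the first two letters. -/
inductive SpExtra : List ℤ → List ℤ → Prop
  | down (a : ℤ) (t : List ℤ) : SpExtra (a :: (a - 1) :: t) (a :: (a + 1) :: t)
  | comm (a b : ℤ) (t : List ℤ) (h : a % 2 = b % 2) : SpExtra (a :: b :: t) (b :: a :: t)

/-- Symplectic Coxeter–Knuth equivalence. -/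
def SpCKEquiv : List ℤ → List ℤ → Prop :=
  Relation.EqvGen (fun x y => CKStep x y ∨ SpExtra x y)

/-- `half_<(λ)` for a partition given as a list: positive values among `λ_i - i`. -/
def halfLtL (lam : List ℕ) : List ℕ :=
  ((List.range lam.length).map fun k => ((lam.getD k 0 : ℤ) - (k + 1)).toNat).filter
    fun m => decide (0 < m)

/-- The shifted tableau `T^Sp_λ` of shape `half_<(λ)` with entry `i + j` in box `(i,j) ∈ SD_μ`. -/
def TSpTab (lam : List ℕ) : List (List ℤ) :=
  (halfLtL lam).mapIdx fun k m => (List.range m).map fun t => ((2 * (k + 1) + t : ℕ) : ℤ)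

/-- Symmetric partition (list version): the diagram is invariant under transposition. -/
def SymmPartL (lam : List ℕ) : Prop :=
  ∀ p : ℤ × ℤ, p ∈ YDiagL lam ↔ (p.2, p.1) ∈ YDiagL lam

/-- Skew-symmetric partition (list version). -/
def SkewSymmPartL (lam : List ℕ) : Prop :=
  SymmPartL lam ∧ ∀ i : ℤ, (i, i) ∈ YDiagL lam → (i + 1, i + 1) ∉ YDiagL lam →
    (¬ ∃ mu : List ℕ, mu.Pairwise (· ≥ ·) ∧ YDiagL mu = YDiagL lam ∪ {(i, i + 1)} ∧
        YDiagL mu ≠ YDiagL lam) ∧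
    (¬ ∃ mu : List ℕ, mu.Pairwise (· ≥ ·) ∧ YDiagL mu = YDiagL lam \ {(i, i + 1)} ∧
        YDiagL mu ≠ YDiagL lam)

/-! ### Demazure product, orthogonal involution words -/

/-- One step of the Demazure product: multiply by `s_i` on the left if this increases length. -/
noncomputable def demStep (i : ℤ) (x : Equiv.Perm ℤ) : Equiv.Perm ℤ :=
  if lenOf x < lenOf (sT i * x) then sT i * x else x

/-- The Demazure product of the letters of a word. -/
noncomputable def demWordProd (l : List ℤ) : Equiv.Perm ℤ := l.foldr demStep 1

/-- `𝒜^O(z)`: minimal-length `w` with `z = w⁻¹ ∘ w` (Demazure product). -/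
def AO (z : Equiv.Perm ℤ) : Set (Equiv.Perm ℤ) :=
  {w | (∃ l : List ℤ, IsReducedWord w l ∧ demWordProd (l.reverse ++ l) = z) ∧
       ∀ v : Equiv.Perm ℤ, (∃ l : List ℤ, IsReducedWord v l ∧ demWordProd (l.reverse ++ l) = z) →
         lenOf w ≤ lenOf v}

/-- `Cyc(z) = {(a, b) : a < b = z(a)}`. -/
def CycSet (z : Equiv.Perm ℤ) : Set (ℤ × ℤ) := {p | p.1 < p.2 ∧ z p.1 = p.2}

/-- `R^O(z)`: the set of primed involution words for `z`. -/
def RO (z : Equiv.Perm ℤ) : Set (List PLetter) :=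
  {l | ∃ A ⊆ CycSet z, ∃ w ∈ AO z, IsPrimedReducedWord w l ∧ markedSet l = A}

/-- The involution code `c^O_i(z)`. -/
noncomputable def cO (z : Equiv.Perm ℤ) (i : ℤ) : ℕ :=
  {j : ℤ | i < j ∧ z j ≤ min i (z i)}.ncard

/-- `RF^O_n(z)`: orthogonal (primed) reduced factorizations into at most `n` factors. -/
def RFO (n : ℕ) (z : Equiv.Perm ℤ) : Set (ℕ → List PLetter) :=
  {a | (∀ i, PDec (a i)) ∧ (∀ m, n ≤ m → a m = []) ∧ concatP a n ∈ RO z}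

/-- The unprimed image `uRF^O_n(z)` of `RF^O_n(z)`. -/
def uRFO (n : ℕ) (z : Equiv.Perm ℤ) : Set (ℕ → List ℤ) := unprimeF '' RFO n z

/-! ### Primed and orthogonal Coxeter–Knuth equivalence -/

/-- One elementary primed Coxeter–Knuth move. -/
inductive PCKStep : List PLetter → List PLetter → Prop
  | swapACB (u v : List PLetter) {A B C : PLetter} (h1 : A.1 < B.1) (h2 : B.1 < C.1) :
      PCKStep (u ++ A :: C :: B :: v) (u ++ C :: A :: B :: v)
  | swapBCA (u v : List PLetter) {A B C : PLetter} (h1 : A.1 < B.1) (h2 : B.1 < C.1) :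
      PCKStep (u ++ B :: C :: A :: v) (u ++ B :: A :: C :: v)
  | braid00 (u v : List PLetter) {a b : ℤ} (h : b = a + 1 ∨ b = a - 1) :
      PCKStep (u ++ (a, false) :: (b, false) :: (a, false) :: v)
              (u ++ (b, false) :: (a, false) :: (b, false) :: v)
  | braid11 (u v : List PLetter) {a b : ℤ} (h : b = a + 1 ∨ b = a - 1) :
      PCKStep (u ++ (a, true) :: (b, true) :: (a, true) :: v)
              (u ++ (b, true) :: (a, true) :: (b, true) :: v)
  | mixA (u v : List PLetter) {a b : ℤ} (h : b = a + 1 ∨ b = a - 1) :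
      PCKStep (u ++ (a, true) :: (b, false) :: (a, false) :: v)
              (u ++ (b, false) :: (a, false) :: (b, true) :: v)
  | mixB (u v : List PLetter) {a b : ℤ} (h : b = a + 1 ∨ b = a - 1) :
      PCKStep (u ++ (a, false) :: (b, true) :: (a, false) :: v)
              (u ++ (b, false) :: (a, true) :: (b, false) :: v)
  | mixC (u v : List PLetter) {a b : ℤ} (h : b = a + 1 ∨ b = a - 1) :
      PCKStep (u ++ (a, true) :: (b, true) :: (a, false) :: v)
              (u ++ (b, false) :: (a, true) :: (b, true) :: v)
  | mixD (u v : List PLetter) {a b : ℤ} (h : b = a + 1 ∨ b = a - 1) :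
      PCKStep (u ++ (a, true) :: (b, false) :: (a, true) :: v)
              (u ++ (b, true) :: (a, false) :: (b, true) :: v)

/-- The extra orthogonal relations, affecting the first letters of words. -/
inductive OExtra : List PLetter → List PLetter → Prop
  | prime (a : ℤ) (w : List PLetter) : OExtra ((a, false) :: w) ((a, true) :: w)
  | comm00 (a b : ℤ) (w : List PLetter) :
      OExtra ((a, false) :: (b, false) :: w) ((b, false) :: (a, false) :: w)
  | comm01 (a b : ℤ) (w : List PLetter) :
      OExtra ((a, false) :: (b, true) :: w) ((b, false) :: (a, true) :: w)
  | comm10 (a b : ℤ) (w : List PLetter) :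
      OExtra ((a, true) :: (b, false) :: w) ((b, true) :: (a, false) :: w)
  | comm11 (a b : ℤ) (w : List PLetter) :
      OExtra ((a, true) :: (b, true) :: w) ((b, true) :: (a, true) :: w)

/-- Orthogonal Coxeter–Knuth equivalence. -/
def OCKEquiv : List PLetter → List PLetter → Prop :=
  Relation.EqvGen (fun x y => PCKStep x y ∨ OExtra x y)

/-- Increasing shifted tableau with primed entries: removing the primes yields an increasing
shifted tableau. -/
def ShIncrTabP (T : List (List PLetter)) : Prop := ShIncrTab (T.map unprimeW)

/-- Decreasing shifted tableau with primed entries. -/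
def ShDecrTabP (T : List (List PLetter)) : Prop := ShDecrTab (T.map unprimeW)

/-- No primed entries on the main diagonal (the first entry of each row). -/
def DiagUnprimed (T : List (List PLetter)) : Prop :=
  ∀ r ∈ T, ∀ p : PLetter, r.head? = some p → p.2 = false

/-- The row reading word of a primed shifted tableau. -/
def rowwordP (T : List (List PLetter)) : List PLetter := T.reverse.flatten

/-- The shape of a primed tableau. -/
def shapeOfP (T : List (List PLetter)) : List ℕ := T.map List.length

/-! ### Iterated partial operators -/

def iterOpt {α : Type*} (g : α → Option α) : ℕ → α → Option α
  | 0, a => some a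
  | m + 1, a => (g a).bind (iterOpt g m)

/-! ### Weak compositions as functions `ℤ → ℕ` supported on positive integers -/

/-- A weak composition: nonnegative entries indexed by positive integers, finitely supported. -/
def WeakCompF (α : ℤ → ℕ) : Prop :=
  (∀ i ≤ 0, α i = 0) ∧ ∃ N : ℤ, ∀ i, N ≤ i → α i = 0

/-- A partition: a weakly decreasing weak composition. -/
def IsPartitionFun (lam : ℤ → ℕ) : Prop :=
  WeakCompF lam ∧ ∀ i : ℤ, 1 ≤ i → lam (i + 1) ≤ lam i

/-- `lam` is the decreasing rearrangement `λ(α)` of `α`: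
it is a partition with the same part multiplicities. -/
def IsDecRearr (α lam : ℤ → ℕ) : Prop :=
  IsPartitionFun lam ∧ ∀ k : ℕ, 0 < k →
    {i : ℤ | 1 ≤ i ∧ k ≤ α i}.ncard = {i : ℤ | 1 ≤ i ∧ k ≤ lam i}.ncard

/-- The Young diagram of a partition function (1-indexed positions). -/
def YDiag (lam : ℤ → ℕ) : Set (ℤ × ℤ) :=
  {p | 1 ≤ p.1 ∧ 1 ≤ p.2 ∧ p.2 ≤ (lam p.1 : ℤ)}

/-- Symmetric partition: diagram invariant under transposition. -/
def SymmPartF (lam : ℤ → ℕ) : Prop :=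
  IsPartitionFun lam ∧ ∀ p : ℤ × ℤ, p ∈ YDiag lam ↔ (p.2, p.1) ∈ YDiag lam

/-- Skew-symmetric partition. -/
def SkewSymmPartF (lam : ℤ → ℕ) : Prop :=
  SymmPartF lam ∧ ∀ i : ℤ, (i, i) ∈ YDiag lam → (i + 1, i + 1) ∉ YDiag lam →
    (¬ ∃ mu : ℤ → ℕ, IsPartitionFun mu ∧ YDiag mu = YDiag lam ∪ {(i, i + 1)} ∧
        YDiag mu ≠ YDiag lam) ∧
    (¬ ∃ mu : ℤ → ℕ, IsPartitionFun mu ∧ YDiag mu = YDiag lam \ {(i, i + 1)} ∧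
        YDiag mu ≠ YDiag lam)

/-- The Demazure action of a simple transposition on weak compositions:
sort the entries in positions `i, i+1` into weakly increasing order. -/
def sComp (i : ℤ) (β : ℤ → ℕ) : ℤ → ℕ :=
  if β (i + 1) < β i then
    (fun j => if j = i then β (i + 1) else if j = i + 1 then β i else β j)
  else β

/-- The Demazure action of a word on a weak composition (rightmost letter acts first). -/
def demCompAct (l : List ℤ) (β : ℤ → ℕ) : ℤ → ℕ := l.foldr sComp β

/-- `u = u(α)`: the minimal-length permutation with `α = u ∘ λ(α)` under the Demazure action. -/
def IsUofAlpha (α lam : ℤ → ℕ) (u : Equiv.Perm ℤ) : Prop :=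
  u ∈ SinftySet ∧ (∃ l : List ℤ, IsReducedWord u l ∧ demCompAct l lam = α) ∧
  ∀ v ∈ SinftySet, (∃ l : List ℤ, IsReducedWord v l ∧ demCompAct l lam = α) → lenOf u ≤ lenOf v

/-! ### Isobaric divided differences, Schubert polynomials -/

/-- `g = π_i f`, i.e. `(x_i - x_{i+1}) g = x_i f - x_{i+1} (s_i f)`. -/
def IsPiApply (i : ℤ) (f g : MvPolynomial ℤ ℤ) : Prop :=
  (X i - X (i + 1)) * g = X i * f - X (i + 1) * MvPolynomial.rename (sT i) f

/-- `g = π_{i_1} π_{i_2} ⋯ π_{i_k} f` for the word `l = [i_1, …, i_k]`. -/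
inductive IsPiWord : List ℤ → MvPolynomial ℤ ℤ → MvPolynomial ℤ ℤ → Prop
  | nil (f : MvPolynomial ℤ ℤ) : IsPiWord [] f f
  | cons (i : ℤ) (t : List ℤ) (f h g : MvPolynomial ℤ ℤ) :
      IsPiWord t f h → IsPiApply i h g → IsPiWord (i :: t) f g

/-- The dominant monomial `x^λ = ∏_{k=1}^{M} x_k^{λ_k}`. -/
noncomputable def xpow (lam : ℤ → ℕ) (M : ℕ) : MvPolynomial ℤ ℤ :=
  ∏ k ∈ Finset.range M, (X ((k : ℤ) + 1) : MvPolynomial ℤ ℤ) ^ lam ((k : ℤ) + 1)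

/-- The defining axioms of the family of Schubert polynomials `{𝔖_w}_{w ∈ S_∞}`:
`𝔖_w = x^λ` for `w` dominant of shape `λ`, and
`∂_i 𝔖_w = 𝔖_{w s_i}` whenever `w(i) > w(i+1)` (cleared of denominators). -/
def IsSchubertFamily (Sf : Equiv.Perm ℤ → MvPolynomial ℤ ℤ) : Prop :=
  (∀ w ∈ SinftySet, ∀ lam : ℤ → ℕ, IsPartitionFun lam → RotheD w = YDiag lam →
     ∀ M : ℕ, (∀ i : ℤ, (M : ℤ) < i → lam i = 0) → Sf w = xpow lam M) ∧
  (∀ w ∈ SinftySet, ∀ i : ℤ, 1 ≤ i → w (i + 1) < w i →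
     (X i - X (i + 1)) * Sf (w * sT i) = Sf w - MvPolynomial.rename (sT i) (Sf w))

/-- Substituting `x_m = 0` for all `m > n` in a polynomial. -/
noncomputable def restrictVars (n : ℕ) (g : MvPolynomial ℤ ℤ) : MvPolynomial ℤ ℤ :=
  (MvPolynomial.aeval fun m : ℤ => if m ≤ (n : ℤ) then (X m : MvPolynomial ℤ ℤ) else 0) g

/-! ### Queer crystal operators `ē_1`, `f̄_1`, `σ_i` on symplectic factorizations -/

/-- Insert a letter directly after the first letter of a list. -/
def insertAfterFirst (c : ℤ) : List ℤ → List ℤ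
  | [] => [c]
  | x :: t => x :: c :: t

/-- The operator `ē_1` on symplectic reduced factorizations. -/
def e1barOp (a : ℕ → List ℤ) : Option (ℕ → List ℤ) :=
  match a 1 with
  | [] => none
  | y :: s =>
    if ∀ x ∈ a 0, x < y then
      if Even y then
        some (Function.update (Function.update a 1 s) 0 (y :: a 0))
      else
        some (Function.update (Function.update a 1 s) 0 (insertAfterFirst (y - 2) (a 0)))
    else none

/-- The operator `f̄_1` on symplectic reduced factorizations. -/
def f1barOp (a : ℕ → List ℤ) : Option (ℕ → List ℤ) :=
  match a 0 with
  | [] => none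
  | x :: _ =>
    if ∀ y ∈ a 1, y < x then
      if (x - 1) ∈ a 0 then
        some (Function.update (Function.update a 0 ((a 0).erase (x - 1))) 1 ((x + 1) :: a 1))
      else
        some (Function.update (Function.update a 0 ((a 0).erase x)) 1 (x :: a 1))
    else none

/-- The string-reversing operator `σ` acting on factors `i, i+1` (0-indexed):
apply `f^k` where `k = wt_i - wt_{i+1}` if `k ≥ 0`, and `e^{-k}` otherwise. -/
def sigZ (i : ℕ) (a : ℕ → List ℤ) : Option (ℕ → List ℤ) :=
  if (a (i + 1)).length ≤ (a i).length then
    iterOpt (fZ i) ((a i).length - (a (i + 1)).length) a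
  else
    iterOpt (eZ i) ((a (i + 1)).length - (a i).length) a

/-- The operators `ē_{j+1}` (0-indexed `j`), defined by
`ē_i = σ_{i-1} σ_i ē_{i-1} σ_i σ_{i-1}`. -/
def ebarOp : ℕ → (ℕ → List ℤ) → Option (ℕ → List ℤ)
  | 0 => e1barOp
  | j + 1 => fun a =>
      (sigZ j a).bind fun b => (sigZ (j + 1) b).bind fun c =>
        (ebarOp j c).bind fun d => (sigZ (j + 1) d).bind (sigZ j)

/-- The operators `f̄_{j+1}` (0-indexed `j`). -/
def fbarOp : ℕ → (ℕ → List ℤ) → Option (ℕ → List ℤ)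
  | 0 => f1barOp
  | j + 1 => fun a =>
      (sigZ j a).bind fun b => (sigZ (j + 1) b).bind fun c =>
        (fbarOp j c).bind fun d => (sigZ (j + 1) d).bind (sigZ j)

/-! ### Crystal Demazure operators on symplectic factorizations -/

/-- The crystal Demazure operator `𝔇_i` (paper-indexed `i ∈ [n-1]`) inside the ambient
crystal `RF^Sp_n(z)`:  all `b` with `e_i^m(b) ∈ X` for some `m ∈ ℕ`. -/
def DOpSp (n : ℕ) (z : Equiv.Perm ℤ) (i : ℤ) (Xs : Set (ℕ → List ℤ)) : Set (ℕ → List ℤ) :=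
  {b | b ∈ RFSp n z ∧ ∃ m : ℕ, ∃ b', iterOpt (eZ (i - 1).toNat) m b = some b' ∧ b' ∈ Xs}

/-- `𝔇_{i_1} 𝔇_{i_2} ⋯ 𝔇_{i_k} X` for the word `l = [i_1, …, i_k]`. -/
def DemFoldSp (n : ℕ) (z : Equiv.Perm ℤ) (l : List ℤ) (Xs : Set (ℕ → List ℤ)) :
    Set (ℕ → List ℤ) :=
  l.foldr (fun i Y => DOpSp n z i Y) Xs

/-!
The pairing rule and the crystal operators on primed factorizations only look at ceilings, and in
a factor of a reduced word no two letters have the same ceiling, so erasing the primes commutes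
with `e_i` and `f_i`: the swaps of primes are invisible afterwards. Left multiplication by `s_i`
adds or removes exactly one inversion, so a reduced word of `w` has `|Inv(w)|` letters and the
pairs `(a_j, b_j)` attached to its positions are distinct and exhaust `Inv(w)`. Hence a primed
reduced word is determined by its ceiling and its marked set, and priming the positions whose
pair lies in `A` inverts unpriming.
-/

/-! ### Inversions of reduced words -/

@[simp] lemma wordProd_nil : wordProd [] = 1 := rfl

@[simp] lemma wordProd_cons (i : ℤ) (t : List ℤ) : wordProd (i :: t) = sT i * wordProd t := by
  simp [wordProd]

@[simp] lemma wordProd_append (u v : List ℤ) : wordProd (u ++ v) = wordProd u * wordProd v := by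
  simp [wordProd]

@[simp] lemma sT_mul_self (i : ℤ) : sT i * sT i = 1 := Equiv.swap_mul_self _ _

lemma wordProd_reverse (l : List ℤ) : wordProd l.reverse = (wordProd l)⁻¹ := by
  induction l with
  | nil => simp
  | cons i t ih => simp [ih, sT]

lemma exists_wordProd_apply_eq_self (l : List ℤ) :
    ∃ N : ℤ, ∀ x, x < -N ∨ N < x → wordProd l x = x := by
  induction l with
  | nil => exact ⟨0, fun _ _ => rfl⟩
  | cons i t ih =>
    obtain ⟨N, hN⟩ := ih
    refine ⟨max N (max i (-i) + 1), fun x hx => ?_⟩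
    rw [wordProd_cons, Equiv.Perm.mul_apply, hN x (by omega), sT,
      Equiv.swap_apply_of_ne_of_ne (by omega) (by omega)]

lemma invSet_wordProd_finite (m : List ℤ) : (InvSet (wordProd m)).Finite := by
  obtain ⟨N, hN⟩ := exists_wordProd_apply_eq_self m
  refine ((Set.finite_Icc (-N) N).prod (Set.finite_Icc (-N) N)).subset ?_
  rintro ⟨x, y⟩ ⟨hxy, hinv⟩
  have hN' : ∀ z, wordProd m z < -N ∨ N < wordProd m z → wordProd m z = z :=
    fun z hz => (wordProd m).injective (hN _ hz)
  have := hN x; have := hN y; have := hN' x; have := hN' y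
  dsimp only at hxy hinv
  simp only [Set.mem_prod, Set.mem_Icc]
  omega

lemma StrictMono.sub_le_sub_of_le {v : ℤ → ℤ} (hv : StrictMono v) {x y : ℤ} (h : x ≤ y) :
    y - x ≤ v y - v x := by
  induction y, h using Int.leInduction with
  | base => simp
  | succ y _ ih => have := hv (lt_add_one y); omega

lemma eq_one_of_apply_lt_apply_succ (u : Equiv.Perm ℤ) (N : ℤ)
    (hN : ∀ x, x < -N ∨ N < x → u x = x) (h : ∀ i, u i < u (i + 1)) : u = 1 := by
  have hmono : StrictMono u := strictMono_int_of_lt_succ h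
  ext x
  have hlo : u (min x (-N - 1)) = min x (-N - 1) := hN _ (Or.inl (by omega))
  have hhi : u (max x (N + 1)) = max x (N + 1) := hN _ (Or.inr (by omega))
  have h₁ := hmono.sub_le_sub_of_le (min_le_left x (-N - 1))
  have h₂ := hmono.sub_le_sub_of_le (le_max_left x (N + 1))
  simp only [Equiv.Perm.coe_one, id_eq]
  omega

lemma sT_mul_apply (i : ℤ) (u : Equiv.Perm ℤ) (x : ℤ) :
    (sT i * u) x = if u x = i then i + 1 else if u x = i + 1 then i else u x := by
  simp [sT, Equiv.swap_apply_def]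

lemma mem_invSet_sT_mul (u : Equiv.Perm ℤ) (i x y : ℤ) :
    (x, y) ∈ InvSet (sT i * u) ↔ x < y ∧
      if (u x = i ∧ u y = i + 1) ∨ (u x = i + 1 ∧ u y = i) then u x < u y else u y < u x := by
  have hne : x ≠ y → u x ≠ u y := fun h e => h (u.injective e)
  simp only [InvSet, Set.mem_ofPred_eq, sT_mul_apply]
  constructor <;> rintro ⟨hxy, h⟩ <;> refine ⟨hxy, ?_⟩ <;> have := hne hxy.ne <;>
    split_ifs at h ⊢ <;> omega

lemma invSet_sT_mul_of_lt (u : Equiv.Perm ℤ) (i : ℤ) (h : u⁻¹ i < u⁻¹ (i + 1)) :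
    InvSet (sT i * u) = insert (u⁻¹ i, u⁻¹ (i + 1)) (InvSet u) := by
  ext ⟨x, y⟩
  have hx : u x = i ↔ x = u⁻¹ i := Equiv.Perm.eq_inv_iff_eq.symm
  have hx' : u x = i + 1 ↔ x = u⁻¹ (i + 1) := Equiv.Perm.eq_inv_iff_eq.symm
  have hy : u y = i ↔ y = u⁻¹ i := Equiv.Perm.eq_inv_iff_eq.symm
  have hy' : u y = i + 1 ↔ y = u⁻¹ (i + 1) := Equiv.Perm.eq_inv_iff_eq.symm
  rw [mem_invSet_sT_mul, Set.mem_insert_iff, Prod.mk.injEq]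
  simp only [InvSet, Set.mem_ofPred_eq]
  split_ifs <;> omega

lemma invSet_sT_mul_of_gt (u : Equiv.Perm ℤ) (i : ℤ) (h : u⁻¹ (i + 1) < u⁻¹ i) :
    InvSet (sT i * u) = InvSet u \ {(u⁻¹ (i + 1), u⁻¹ i)} := by
  ext ⟨x, y⟩
  have hx : u x = i ↔ x = u⁻¹ i := Equiv.Perm.eq_inv_iff_eq.symm
  have hx' : u x = i + 1 ↔ x = u⁻¹ (i + 1) := Equiv.Perm.eq_inv_iff_eq.symm
  have hy : u y = i ↔ y = u⁻¹ i := Equiv.Perm.eq_inv_iff_eq.symm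
  have hy' : u y = i + 1 ↔ y = u⁻¹ (i + 1) := Equiv.Perm.eq_inv_iff_eq.symm
  rw [mem_invSet_sT_mul, Set.mem_sdiff, Set.mem_singleton_iff, Prod.mk.injEq]
  simp only [InvSet, Set.mem_ofPred_eq]
  split_ifs <;> omega

@[simp] lemma invSet_one : InvSet 1 = ∅ :=
  Set.eq_empty_of_forall_notMem fun _ h => lt_asymm h.1 h.2

lemma inv_apply_lt_or_gt (u : Equiv.Perm ℤ) (i : ℤ) :
    u⁻¹ i < u⁻¹ (i + 1) ∨ u⁻¹ (i + 1) < u⁻¹ i := by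
  have : u⁻¹ i ≠ u⁻¹ (i + 1) := fun h => by simpa using u⁻¹.injective h
  omega

lemma inv_apply_mem_invSet (u : Equiv.Perm ℤ) {i : ℤ} (h : u⁻¹ (i + 1) < u⁻¹ i) :
    (u⁻¹ (i + 1), u⁻¹ i) ∈ InvSet u :=
  ⟨h, by simp⟩

lemma exists_inv_apply_succ_lt (m : List ℤ) (h : wordProd m ≠ 1) :
    ∃ i, (wordProd m)⁻¹ (i + 1) < (wordProd m)⁻¹ i := by
  obtain ⟨N, hN⟩ := exists_wordProd_apply_eq_self m.reverse
  rw [wordProd_reverse] at hN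
  by_contra! h'
  exact h (inv_eq_one.1 (eq_one_of_apply_lt_apply_succ _ N hN
    fun i => (inv_apply_lt_or_gt _ i).resolve_right (h' i).not_gt))

lemma ncard_invSet_wordProd_le (m : List ℤ) : (InvSet (wordProd m)).ncard ≤ m.length := by
  induction m with
  | nil => simp
  | cons i t ih =>
    rw [wordProd_cons, List.length_cons]
    rcases inv_apply_lt_or_gt (wordProd t) i with h | h
    · rw [invSet_sT_mul_of_lt _ _ h]
      exact (Set.ncard_insert_le _ _).trans (by omega)
    · rw [invSet_sT_mul_of_gt _ _ h]
      exact (Set.ncard_sdiff_singleton_le _ _).trans (by omega)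

lemma exists_wordProd_eq_length_eq_ncard (m : List ℤ) :
    ∃ m' : List ℤ, wordProd m' = wordProd m ∧ m'.length = (InvSet (wordProd m)).ncard := by
  generalize hk : (InvSet (wordProd m)).ncard = k
  induction k generalizing m with
  | zero =>
    refine ⟨[], ?_, rfl⟩
    by_contra hne
    obtain ⟨i, hi⟩ := exists_inv_apply_succ_lt m (Ne.symm hne)
    rw [Set.ncard_eq_zero (invSet_wordProd_finite m)] at hk
    exact hk.subset (inv_apply_mem_invSet _ hi)
  | succ k ih =>
    have hne : wordProd m ≠ 1 := fun h => by simp [h] at hk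
    obtain ⟨i, hi⟩ := exists_inv_apply_succ_lt m hne
    have hk' : (InvSet (wordProd (i :: m))).ncard = k := by
      rw [wordProd_cons, invSet_sT_mul_of_gt _ _ hi,
        Set.ncard_sdiff_singleton_of_mem (inv_apply_mem_invSet _ hi), hk, Nat.add_sub_cancel]
    obtain ⟨m', hm', hlen⟩ := ih (i :: m) hk'
    exact ⟨i :: m', by simp [hm', ← mul_assoc], by simp [hlen]⟩

lemma IsReducedWord.length_eq_ncard {w : Equiv.Perm ℤ} {L : List ℤ} (h : IsReducedWord w L) :
    L.length = (InvSet w).ncard := by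
  obtain ⟨m', hm', hlen⟩ := exists_wordProd_eq_length_eq_ncard L
  rw [h.1] at hm' hlen
  exact le_antisymm (hlen ▸ h.2 m' hm') (h.1 ▸ ncard_invSet_wordProd_le L)

lemma IsReducedWord.tail {w : Equiv.Perm ℤ} {x : ℤ} {t : List ℤ}
    (h : IsReducedWord w (x :: t)) : IsReducedWord (wordProd t) t :=
  ⟨rfl, fun m hm => by
    simpa using h.2 (x :: m) (by rw [← h.1, wordProd_cons, wordProd_cons, hm])⟩

/-- The pair `(a_1, b_1)` of the word `x :: t`. -/
def headInv (x : ℤ) (t : List ℤ) : ℤ × ℤ :=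
  ((wordProd t)⁻¹ x, (wordProd t)⁻¹ (x + 1))

/-- The pairs `(a_j, b_j)` of the word `L`, in the order of its positions `j`. -/
def inversionList : List ℤ → List (ℤ × ℤ)
  | [] => []
  | x :: t => headInv x t :: inversionList t

@[simp] lemma length_inversionList (L : List ℤ) : (inversionList L).length = L.length := by
  induction L with
  | nil => rfl
  | cons x t ih => simp [inversionList, ih]

lemma getElem_inversionList (L : List ℤ) (j : ℕ) (hj : j < (inversionList L).length) :
    (inversionList L)[j] = headInv (L[j]'(by simpa using hj)) (L.drop (j + 1)) := by
  induction L generalizing j with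
  | nil => simp at hj
  | cons x t ih => cases j <;> simp [inversionList, ih]

lemma IsReducedWord.invSet_cons {w : Equiv.Perm ℤ} {x : ℤ} {t : List ℤ}
    (h : IsReducedWord w (x :: t)) :
    headInv x t ∉ InvSet (wordProd t) ∧
      InvSet w = insert (headInv x t) (InvSet (wordProd t)) := by
  have hlen := h.length_eq_ncard
  have htlen := h.tail.length_eq_ncard
  rw [← h.1, wordProd_cons] at hlen ⊢
  rcases inv_apply_lt_or_gt (wordProd t) x with hlt | hgt
  · refine ⟨fun hmem => ?_, invSet_sT_mul_of_lt _ _ hlt⟩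
    simpa [headInv] using hmem.2
  · rw [invSet_sT_mul_of_gt _ _ hgt] at hlen
    have := Set.ncard_sdiff_singleton_le (InvSet (wordProd t))
      ((wordProd t)⁻¹ (x + 1), (wordProd t)⁻¹ x)
    simp only [List.length_cons] at hlen
    omega

lemma IsReducedWord.mem_inversionList_iff {w : Equiv.Perm ℤ} {L : List ℤ}
    (h : IsReducedWord w L) (p : ℤ × ℤ) : p ∈ inversionList L ↔ p ∈ InvSet w := by
  induction L generalizing w with
  | nil => simp [inversionList, ← h.1]
  | cons x t ih => simp [inversionList, h.invSet_cons.2, ih h.tail]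

lemma IsReducedWord.nodup_inversionList {w : Equiv.Perm ℤ} {L : List ℤ}
    (h : IsReducedWord w L) : (inversionList L).Nodup := by
  induction L generalizing w with
  | nil => exact List.nodup_nil
  | cons x t ih =>
    refine List.nodup_cons.2 ⟨fun hmem => ?_, ih h.tail⟩
    exact h.invSet_cons.1 ((h.tail.mem_inversionList_iff _).1 hmem)

/-! ### Unpriming commutes with the crystal operators -/

@[simp] lemma unprimeW_nil : unprimeW [] = [] := rfl

@[simp] lemma unprimeW_cons (p : PLetter) (t : List PLetter) :
    unprimeW (p :: t) = p.1 :: unprimeW t := rfl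

@[simp] lemma length_unprimeW (u : List PLetter) : (unprimeW u).length = u.length :=
  List.length_map _

lemma findPairZ_unprimeW (c : ℤ) (l : List PLetter) :
    findPairZ c (unprimeW l) = Prod.map (Option.map Prod.fst) unprimeW (findPairP c l) := by
  induction l with
  | nil => rfl
  | cons b rest ih => by_cases h : b.1 < c <;> simp [findPairZ, findPairP, h, ih]

lemma findPairP_subset (c : ℤ) (l : List PLetter) :
    (∀ b ∈ (findPairP c l).1, b ∈ l) ∧ (findPairP c l).2 ⊆ l := by
  induction l with
  | nil => simp [findPairP]
  | cons a rest ih =>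
    by_cases h : a.1 < c
    · simp [findPairP, h]
    · simp only [findPairP, h, if_false]
      exact ⟨fun b hb => List.mem_cons_of_mem _ (ih.1 b hb), List.cons_subset_cons _ ih.2⟩

lemma pairsZ_unprimeW (u v : List PLetter) :
    pairsZ (unprimeW u) (unprimeW v) = (pairsP u v).map (Prod.map Prod.fst Prod.fst) := by
  suffices pairFoldZ (unprimeW u) (unprimeW v.reverse) =
      Prod.map (List.map (Prod.map Prod.fst Prod.fst)) unprimeW (pairFoldP u v.reverse) by
    simpa [pairsZ, pairsP, unprimeW, List.map_reverse] using congrArg Prod.fst this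
  unfold pairFoldZ pairFoldP
  rw [show unprimeW v.reverse = v.reverse.map Prod.fst from rfl, List.foldl_map]
  refine List.foldl_hom (init := ([], u))
    (Prod.map (List.map (Prod.map Prod.fst Prod.fst)) unprimeW)
    fun (st : List (PLetter × PLetter) × List PLetter) c => ?_
  simp only [Prod.map_snd, findPairZ_unprimeW]
  rcases findPairP c.1 st.2 with ⟨_ | b, r⟩ <;> rfl

lemma mem_pairsP (u v : List PLetter) {p : PLetter × PLetter} (hp : p ∈ pairsP u v) :
    p.1 ∈ u ∧ p.2 ∈ v := by
  let Invariant (st : List (PLetter × PLetter) × List PLetter) : Prop :=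
    (∀ p ∈ st.1, p.1 ∈ u ∧ p.2 ∈ v) ∧ st.2 ⊆ u
  suffices Invariant (pairFoldP u v.reverse) from this.1 p hp
  refine List.foldlRecOn _ _ ⟨by simp, List.Subset.refl u⟩ fun ⟨ps, r⟩ hst c hc => ?_
  have hsub := findPairP_subset c.1 r
  rcases h : findPairP c.1 r with ⟨_ | b, r'⟩ <;> simp only [h] at hsub ⊢
  · exact ⟨hst.1, List.Subset.trans hsub.2 hst.2⟩
  · refine ⟨?_, List.Subset.trans hsub.2 hst.2⟩
    intro p hp
    rcases List.mem_cons.1 hp with rfl | hp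
    · exact ⟨hst.2 (hsub.1 b rfl), List.mem_reverse.1 hc⟩
    · exact hst.1 p hp

lemma List.map_filter_notMem_map {α β γ : Type*} [BEq α] [LawfulBEq α] [BEq β] [LawfulBEq β]
    (f : α → β) (g : γ → α) {l : List α} {ps : List γ} (hl : (l.map f).Nodup)
    (hps : ∀ p ∈ ps, g p ∈ l) :
    (l.filter fun c => c ∉ ps.map g).map f =
      (l.map f).filter fun x => x ∉ ps.map (f ∘ g) := by
  rw [List.filter_map]
  congr 1
  refine List.filter_congr fun c hc => ?_
  simp only [List.mem_map, Function.comp_apply, decide_eq_decide]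
  exact not_congr ⟨fun ⟨p, hp, he⟩ => ⟨p, hp, he ▸ rfl⟩,
    fun ⟨p, hp, he⟩ => ⟨p, hp, List.inj_on_of_nodup_map hl (hps p hp) hc he⟩⟩

lemma unprimeW_unpairedSnd (u v : List PLetter) (hv : (unprimeW v).Nodup) :
    unprimeW (unpairedSnd u v) = (unprimeW v).filter
      fun c => c ∉ (pairsZ (unprimeW u) (unprimeW v)).map Prod.snd := by
  rw [pairsZ_unprimeW, List.map_map, Prod.map_snd']
  exact List.map_filter_notMem_map _ _ hv fun p hp => (mem_pairsP u v hp).2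

lemma unprimeW_unpairedFst (u v : List PLetter) (hu : (unprimeW u).Nodup) :
    unprimeW (unpairedFst u v) = (unprimeW u).filter
      fun b => b ∉ (pairsZ (unprimeW u) (unprimeW v)).map Prod.fst := by
  rw [pairsZ_unprimeW, List.map_map, Prod.map_fst']
  exact List.map_filter_notMem_map _ _ hu fun p hp => (mem_pairsP u v hp).1

lemma unprimeW_insertDecP {m : ℤ} {u : List PLetter} (hm : m ∉ unprimeW u) (s : Bool) :
    unprimeW (insertDecP (m, s) u) = insertDecZ m (unprimeW u) := by
  induction u with
  | nil => rfl
  | cons q t ih =>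
    simp only [unprimeW_cons, List.mem_cons, not_or] at hm
    have hlt : pval q < pval (m, s) ↔ q.1 < m := by
      obtain ⟨q1, _ | _⟩ := q <;> cases s <;> simp only [pval] at hm ⊢ <;> omega
    by_cases h : q.1 < m
    · simp [insertDecP, insertDecZ, hlt, h]
    · simp [insertDecP, insertDecZ, hlt, h, ih hm.2]

lemma unprimeW_erase {v : List PLetter} {x : PLetter} (hx : x ∈ v) (hv : (unprimeW v).Nodup) :
    unprimeW (v.erase x) = (unprimeW v).erase x.1 := by
  induction v with
  | nil => simp at hx
  | cons b t ih =>
    rw [unprimeW_cons, List.nodup_cons] at hv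
    by_cases h : b = x
    · subst h
      simp
    · have hxt : x ∈ t := (List.mem_cons.1 hx).resolve_left (Ne.symm h)
      have hbx : b.1 ≠ x.1 := fun e => hv.1 (e ▸ List.mem_map_of_mem hxt)
      rw [List.erase_cons_tail (by simpa using h), unprimeW_cons, unprimeW_cons,
        List.erase_cons_tail (by simpa using hbx), ih hxt hv.2]

lemma unprimeW_toggleIn (l : List PLetter) (p : PLetter) :
    unprimeW (toggleIn l p) = unprimeW l := by
  unfold toggleIn unprimeW
  rw [List.map_map]
  exact List.map_congr_left fun q _ => by dsimp only [Function.comp_apply]; split <;> rfl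

lemma unprimeW_foldl_swapPairIn (ps : List (PLetter × PLetter))
    (uv : List PLetter × List PLetter) :
    Prod.map unprimeW unprimeW (ps.foldl swapPairIn uv) = Prod.map unprimeW unprimeW uv := by
  induction ps generalizing uv with
  | nil => rfl
  | cons bc ps ih =>
    rw [List.foldl_cons, ih]
    unfold swapPairIn
    split
    · rfl
    · simp only [Prod.map, unprimeW_toggleIn]

lemma add_qUp_notMem (L : List ℤ) (x : ℤ) : x + (qUp L x : ℤ) ∉ L :=
  Nat.find_spec (exists_add_not_mem L x)

lemma sub_qDown_notMem (L : List ℤ) (x : ℤ) : x - (qDown L x : ℤ) ∉ L :=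
  Nat.find_spec (exists_sub_not_mem L x)

lemma eStepZ_unprimeW (u v : List PLetter) (hv : (unprimeW v).Nodup) :
    eStepZ (unprimeW u) (unprimeW v) = (eStepP u v).map (Prod.map unprimeW unprimeW) := by
  unfold eStepZ eStepP
  rw [← unprimeW_unpairedSnd u v hv]
  rcases h : unpairedSnd u v with _ | ⟨x, r⟩
  · rfl
  · have hxv : x ∈ v := List.mem_of_mem_filter (show x ∈ unpairedSnd u v by simp [h])
    rw [unprimeW_cons, Option.map_some, unprimeW_foldl_swapPairIn, Prod.map_apply,
      unprimeW_insertDecP (add_qUp_notMem _ _), unprimeW_erase hxv hv]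

lemma fStepZ_unprimeW (u v : List PLetter) (hu : (unprimeW u).Nodup) :
    fStepZ (unprimeW u) (unprimeW v) = (fStepP u v).map (Prod.map unprimeW unprimeW) := by
  unfold fStepZ fStepP
  rw [← unprimeW_unpairedFst u v hu, unprimeW, List.getLast?_map]
  rcases h : (unpairedFst u v).getLast? with _ | y
  · rfl
  · have hyu : y ∈ u := List.mem_of_mem_filter (List.mem_of_getLast? h)
    simp only [Option.map_some, unprimeW_foldl_swapPairIn]
    rw [Prod.map_apply, unprimeW_insertDecP (sub_qDown_notMem _ _), unprimeW_erase hyu hu]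

lemma unprimeF_update (a : ℕ → List PLetter) (k : ℕ) (l : List PLetter) :
    unprimeF (Function.update a k l) = Function.update (unprimeF a) k (unprimeW l) :=
  funext (Function.apply_update (fun _ => unprimeW) a k l)

lemma applyAtZ_unprimeF {gZ : List ℤ → List ℤ → Option (List ℤ × List ℤ)}
    {gP : List PLetter → List PLetter → Option (List PLetter × List PLetter)} (i : ℕ)
    (a : ℕ → List PLetter)
    (h : gZ (unprimeW (a i)) (unprimeW (a (i + 1))) =
      (gP (a i) (a (i + 1))).map (Prod.map unprimeW unprimeW)) :
    applyAtZ gZ i (unprimeF a) = (applyAtP gP i a).map unprimeF := by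
  unfold applyAtZ applyAtP
  rw [show unprimeF a i = unprimeW (a i) from rfl,
    show unprimeF a (i + 1) = unprimeW (a (i + 1)) from rfl, h]
  cases gP (a i) (a (i + 1)) <;> simp [unprimeF_update]

lemma eZ_unprimeF (i : ℕ) (a : ℕ → List PLetter) (hv : (unprimeW (a (i + 1))).Nodup) :
    eZ i (unprimeF a) = (eP i a).map unprimeF :=
  applyAtZ_unprimeF i a (eStepZ_unprimeW _ _ hv)

lemma fZ_unprimeF (i : ℕ) (a : ℕ → List PLetter) (hu : (unprimeW (a i)).Nodup) :
    fZ i (unprimeF a) = (fP i a).map unprimeF :=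
  applyAtZ_unprimeF i a (fStepZ_unprimeW _ _ hu)

/-! ### Unpriming is a bijection -/

lemma IsReducedWord.isChain_ne {w : Equiv.Perm ℤ} {L : List ℤ} (h : IsReducedWord w L) :
    L.IsChain (· ≠ ·) := by
  induction L generalizing w with
  | nil => exact .nil
  | cons x t ih =>
    refine List.isChain_cons.2 ⟨fun y hy hxy => ?_, ih h.tail⟩
    obtain ⟨t', rfl⟩ : ∃ t', t = x :: t' := by
      cases t <;> simp_all
    simpa using h.2 t' (by rw [← h.1]; simp [← mul_assoc])

lemma zDec_unprimeW {l : List PLetter} (hl : PDec l) (hne : (unprimeW l).IsChain (· ≠ ·)) :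
    ZDec (unprimeW l) := by
  induction l with
  | nil => exact .nil
  | cons p t ih =>
    rw [PDec, List.pairwise_cons] at hl
    rw [unprimeW_cons, List.isChain_cons] at hne
    have ht : ZDec (unprimeW t) := ih hl.2 hne.2
    refine List.pairwise_cons.2 ⟨?_, ht⟩
    cases t with
    | nil => simp
    | cons q t' =>
      have hqp : q.1 < p.1 := by
        have h₁ := hl.1 q List.mem_cons_self
        have h₂ := hne.1 q.1 rfl
        obtain ⟨p₁, _ | _⟩ := p <;> obtain ⟨q₁, _ | _⟩ := q <;>
          simp only [pval] at h₁ h₂ ⊢ <;> omega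
      intro y hy
      rcases List.mem_cons.1 hy with rfl | hy
      · exact hqp
      · exact (List.rel_of_pairwise_cons ht hy).trans hqp

lemma pDec_of_zDec_unprimeW {l : List PLetter} (h : ZDec (unprimeW l)) : PDec l :=
  (List.pairwise_map.1 h).imp fun {p q} hpq => by simp only [pval]; split_ifs <;> omega

lemma zDec_unprimeW_of_mem_RFplusN {n : ℕ} {w : Equiv.Perm ℤ} {A : Set (ℤ × ℤ)}
    {a : ℕ → List PLetter} (ha : a ∈ RFplusN n w A) (m : ℕ) : ZDec (unprimeW (a m)) := by
  obtain ⟨hdec, hzero, hred, -⟩ := ha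
  by_cases hm : m < n
  · refine zDec_unprimeW (hdec m) (hred.isChain_ne.infix ?_)
    exact (List.infix_of_mem_flatten (List.mem_map_of_mem (List.mem_range.2 hm))).map Prod.fst
  · simp [hzero m (not_lt.1 hm), ZDec]

lemma concatZ_unprimeF (a : ℕ → List PLetter) (n : ℕ) :
    concatZ (unprimeF a) n = unprimeW (concatP a n) := by
  rw [concatP, unprimeW, List.map_flatten, List.map_map]
  rfl

lemma mapsTo_unprimeF (n : ℕ) (w : Equiv.Perm ℤ) (A : Set (ℤ × ℤ)) :
    Set.MapsTo unprimeF (RFplusN n w A) (RFZn n w) := fun a ha =>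
  ⟨zDec_unprimeW_of_mem_RFplusN ha, fun m hm => by simp [unprimeF, ha.2.1 m hm],
    concatZ_unprimeF a n ▸ ha.2.2.1⟩

lemma mem_markedSet_iff (M : List PLetter) (p : ℤ × ℤ) :
    p ∈ markedSet M ↔ ∃ (j : ℕ) (hj : j < M.length),
      M[j].2 = true ∧ p = (inversionList (unprimeW M))[j]'(by simpa [unprimeW]) := by
  have hdrop (j : ℕ) :
      (M.drop (j + 1)).reverse.map Prod.fst = ((unprimeW M).drop (j + 1)).reverse := by
    rw [List.map_reverse, unprimeW, List.map_drop]
  simp only [markedSet, Set.mem_ofPred_eq, Fin.exists_iff, List.get_eq_getElem, hdrop,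
    wordProd_reverse, getElem_inversionList, headInv, Prod.ext_iff]
  simp only [unprimeW, List.getElem_map]

lemma getElem_snd_iff_mem_markedSet {M : List PLetter}
    (hnd : (inversionList (unprimeW M)).Nodup) {j : ℕ} (hj : j < M.length) :
    M[j].2 = true ↔ (inversionList (unprimeW M))[j]'(by simpa [unprimeW]) ∈ markedSet M := by
  rw [mem_markedSet_iff]
  refine ⟨fun h => ⟨j, hj, h, rfl⟩, fun ⟨k, hk, hkt, he⟩ => ?_⟩
  obtain rfl := hnd.getElem_inj_iff.1 he
  exact hkt

lemma eq_of_unprimeW_eq_of_markedSet_eq {M M' : List PLetter} (hL : unprimeW M = unprimeW M')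
    (hnd : (inversionList (unprimeW M)).Nodup) (hmark : markedSet M = markedSet M') : M = M' := by
  have hlen : M.length = M'.length := by simpa using congrArg List.length hL
  refine List.ext_getElem hlen fun j h h' => Prod.ext ?_ ?_
  · simpa [unprimeW] using List.getElem_of_eq hL (by simpa using h)
  · rw [Bool.eq_iff_iff, getElem_snd_iff_mem_markedSet hnd h,
      getElem_snd_iff_mem_markedSet (hL ▸ hnd) h', hmark]
    simp only [hL]

lemma injOn_unprimeF (n : ℕ) (w : Equiv.Perm ℤ) (A : Set (ℤ × ℤ)) :
    Set.InjOn unprimeF (RFplusN n w A) := by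
  rintro a ⟨-, hz, hred, hmark⟩ a' ⟨-, hz', -, hmark'⟩ he
  have hL : unprimeW (concatP a n) = unprimeW (concatP a' n) := by
    rw [← concatZ_unprimeF, he, concatZ_unprimeF]
  have hM : concatP a n = concatP a' n :=
    eq_of_unprimeW_eq_of_markedSet_eq hL hred.nodup_inversionList (hmark.trans hmark'.symm)
  have hF : (List.range n).map a = (List.range n).map a' := by
    refine List.eq_iff_flatten_eq.2 ⟨hM, ?_⟩
    simp only [List.map_map]
    exact List.map_congr_left fun k _ => by
      simpa [unprimeF] using congrArg List.length (congrFun he k)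
  funext m
  by_cases hm : m < n
  · exact List.map_inj_left.1 hF m (List.mem_range.2 hm)
  · rw [hz m (by omega), hz' m (by omega)]

open Classical in
/-- `s` is the part of the word that follows `L`: the inversions of the letters of `L`
depend on it. -/
noncomputable def primeWord (A : Set (ℤ × ℤ)) : List ℤ → List ℤ → List PLetter
  | [], _ => []
  | x :: t, s => (x, decide (headInv x (t ++ s) ∈ A)) :: primeWord A t s

@[simp] lemma unprimeW_primeWord (A : Set (ℤ × ℤ)) (L s : List ℤ) :
    unprimeW (primeWord A L s) = L := by
  induction L with
  | nil => rfl
  | cons x t ih => simp [primeWord, ih]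

lemma primeWord_append (A : Set (ℤ × ℤ)) (L₁ L₂ s : List ℤ) :
    primeWord A (L₁ ++ L₂) s = primeWord A L₁ (L₂ ++ s) ++ primeWord A L₂ s := by
  induction L₁ with
  | nil => rfl
  | cons x t ih => simp [primeWord, ih]

@[simp] lemma length_primeWord (A : Set (ℤ × ℤ)) (L s : List ℤ) :
    (primeWord A L s).length = L.length := by
  rw [← length_unprimeW, unprimeW_primeWord]

lemma getElem_primeWord_snd (A : Set (ℤ × ℤ)) (L s : List ℤ) {j : ℕ} (hj : j < L.length) :
    ((primeWord A L s)[j]'(by simpa)).2 = true ↔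
      (inversionList (L ++ s))[j]'(by simp; omega) ∈ A := by
  induction L generalizing j with
  | nil => simp at hj
  | cons x t ih =>
    cases j with
    | zero => simp [primeWord, inversionList]
    | succ j => simpa [primeWord, inversionList] using ih (by simpa using hj)

lemma markedSet_primeWord {w : Equiv.Perm ℤ} {L : List ℤ} {A : Set (ℤ × ℤ)}
    (h : IsReducedWord w L) (hA : A ⊆ InvSet w) : markedSet (primeWord A L []) = A := by
  ext p
  simp only [mem_markedSet_iff, unprimeW_primeWord, length_primeWord]
  constructor
  · rintro ⟨j, hj, hprime, rfl⟩
    simpa using (getElem_primeWord_snd A L [] hj).1 hprime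
  · intro hp
    obtain ⟨j, hj, rfl⟩ := List.getElem_of_mem ((h.mem_inversionList_iff p).2 (hA hp))
    rw [length_inversionList] at hj
    exact ⟨j, hj, (getElem_primeWord_snd A L [] hj).2 (by simpa using hp), rfl⟩

lemma flatten_mapIdx_primeWord (A : Set (ℤ × ℤ)) (F : List (List ℤ)) (s : List ℤ) :
    (F.mapIdx fun k L => primeWord A L ((F.drop (k + 1)).flatten ++ s)).flatten =
      primeWord A F.flatten s := by
  induction F with
  | nil => rfl
  | cons L F ih => simp [List.mapIdx_cons, ih, primeWord_append]

noncomputable def primeFactorization (A : Set (ℤ × ℤ)) (n : ℕ) (b : ℕ → List ℤ) :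
    ℕ → List PLetter :=
  fun m => primeWord A (b m) ((((List.range n).map b).drop (m + 1)).flatten)

lemma concatP_primeFactorization (A : Set (ℤ × ℤ)) (n : ℕ) (b : ℕ → List ℤ) :
    concatP (primeFactorization A n b) n = primeWord A (concatZ b n) [] := by
  rw [concatZ, ← flatten_mapIdx_primeWord, concatP]
  congr 1
  refine List.ext_getElem (by simp) fun k _ _ => ?_
  simp [primeFactorization]

lemma surjOn_unprimeF (n : ℕ) {w : Equiv.Perm ℤ} {A : Set (ℤ × ℤ)} (hA : A ⊆ InvSet w) :
    Set.SurjOn unprimeF (RFplusN n w A) (RFZn n w) := by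
  rintro b ⟨hdec, hzero, hred⟩
  have hb : unprimeF (primeFactorization A n b) = b := funext fun m => unprimeW_primeWord _ _ _
  refine ⟨primeFactorization A n b, ⟨fun m => ?_, fun m hm => ?_, ?_, ?_⟩, hb⟩
  · refine pDec_of_zDec_unprimeW ?_
    simpa only [primeFactorization, unprimeW_primeWord] using hdec m
  · simp [primeFactorization, hzero m hm, primeWord]
  · rw [IsPrimedReducedWord, concatP_primeFactorization, unprimeW_primeWord]
    exact hred
  · rw [concatP_primeFactorization]
    exact markedSet_primeWord hred hA

theorem unprime_crystal_isomorphism_general (n : ℕ) (w : Equiv.Perm ℤ)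
    (A : Set (ℤ × ℤ)) (hA : A ⊆ InvSet w) :
    Set.BijOn unprimeF (RFplusN n w A) (RFZn n w) ∧
    (∀ a ∈ RFplusN n w A, ∀ m : ℕ, (unprimeF a m).length = (a m).length) ∧
    (∀ a ∈ RFplusN n w A, ∀ i : ℕ, i + 1 < n →
      eZ i (unprimeF a) = Option.map unprimeF (eP i a) ∧
      fZ i (unprimeF a) = Option.map unprimeF (fP i a)) := by
  have hnodup {a} (ha : a ∈ RFplusN n w A) (m : ℕ) : (unprimeW (a m)).Nodup :=
    (zDec_unprimeW_of_mem_RFplusN ha m).imp ne_of_gt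
  exact ⟨⟨mapsTo_unprimeF n w A, injOn_unprimeF n w A, surjOn_unprimeF n hA⟩,
    fun a _ m => length_unprimeW (a m),
    fun a ha i _ => ⟨eZ_unprimeF i a (hnodup ha _), fZ_unprimeF i a (hnodup ha _)⟩⟩

/-- `unprime` is a weight-preserving bijection `RF⁺_n(w, A) → RF_n(w)` that
commutes with the crystal operators `e_i`, `f_i` for all `i ∈ {1, …, n-1}` (0-indexed here:
operator `i` acts on factors `i, i+1`, for `i + 1 < n`), with the convention
`unprime 0 = 0`. -/
theorem unprime_crystal_isomorphism (n : ℕ) (hn : 0 < n) (w : Equiv.Perm ℤ) (hw : w ∈ SZSet)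
    (A : Set (ℤ × ℤ)) (hA : A ⊆ InvSet w) :
    Set.BijOn unprimeF (RFplusN n w A) (RFZn n w) ∧
    (∀ a ∈ RFplusN n w A, ∀ m : ℕ, (unprimeF a m).length = (a m).length) ∧
    (∀ a ∈ RFplusN n w A, ∀ i : ℕ, i + 1 < n →
      eZ i (unprimeF a) = Option.map unprimeF (eP i a) ∧
      fZ i (unprimeF a) = Option.map unprimeF (fP i a)) :=
  unprime_crystal_isomorphism_general n w A hA
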